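/- Let ℓ₁,…,ℓ_m : ℤ^r → ℤ be linear maps (given by integer matrices) and let ε ∈ {1,-1}^m. Define A₀ = {c ∈ ℤ^r : Σᵢcᵢ = 0 and ε_kℓ_k(c) ≥ 0 for all k} and A₁ = {c ∈ ℤ^r : Σᵢcᵢ = 1 and ε_kℓ_k(c) ≥ 0 for all k}. Then there exists a finite subset I ⊆ A₁ such that A₁ = ⋃_{c∈I} (c + A₀). -/

import Mathlib

theorem stmt_11 (r m : ℕ) (M : Fin m → Fin r → ℤ) (ε : Fin m → ℤ)
    (hε : ∀ k, ε k = 1 ∨ ε k = -1) :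
    let ℓ : Fin m → (Fin r → ℤ) → ℤ := fun k c => ∑ i, M k i * c i
    let A₀ : Set (Fin r → ℤ) := {c | (∑ i, c i) = 0 ∧ ∀ k, 0 ≤ ε k * ℓ k c}
    let A₁ : Set (Fin r → ℤ) := {c | (∑ i, c i) = 1 ∧ ∀ k, 0 ≤ ε k * ℓ k c}
    ∃ I : Finset (Fin r → ℤ), ↑I ⊆ A₁ ∧
      A₁ = {x | ∃ c ∈ I, ∃ a ∈ A₀, x = c + a} := by
  intro ℓ A₀ A₁
  classical
  -- the value map into ℕ^m
  set f : (Fin r → ℤ) → (Fin m → ℕ) := fun c k => (ε k * ℓ k c).toNat with hf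
  have hℓadd : ∀ k (c a : Fin r → ℤ), ℓ k (c + a) = ℓ k c + ℓ k a := by
    intro k c a
    simp only [ℓ, Pi.add_apply, mul_add, Finset.sum_add_distrib]
  have hℓsub : ∀ k (c a : Fin r → ℤ), ℓ k (c - a) = ℓ k c - ℓ k a := by
    intro k c a
    simp only [ℓ, Pi.sub_apply, mul_sub, Finset.sum_sub_distrib]
  have hPWO : ∀ S : Set (Fin m → ℕ), S.IsPWO := fun S =>
    Set.isPWO_of_wellQuasiOrderedLE S
  set T : Set (Fin m → ℕ) := f '' A₁ with hT
  set Min : Set (Fin m → ℕ) := {t ∈ T | ∀ s ∈ T, ¬ s < t} with hMin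
  -- every element of T dominates a minimal one
  have hdom : ∀ t ∈ T, ∃ s ∈ Min, s ≤ t := by
    intro t ht
    set S : Set (Fin m → ℕ) := {s ∈ T | s ≤ t} with hS
    have hSwf : S.IsWF := (hPWO S).isWF
    have hSne : S.Nonempty := ⟨t, ht, le_refl t⟩
    refine ⟨hSwf.min hSne, ⟨(hSwf.min_mem hSne).1, ?_⟩, (hSwf.min_mem hSne).2⟩
    intro s hs hlt
    exact hSwf.not_lt_min hSne ⟨hs, le_of_lt (hlt.trans_le (hSwf.min_mem hSne).2)⟩ hlt
  -- Min is finite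
  have hMinfin : Min.Finite := by
    have hanti : IsAntichain (· ≤ ·) Min := by
      intro a ha b hb hne hle
      exact hb.2 a ha.1 (lt_of_le_of_ne hle hne)
    exact hanti.finite_of_partiallyWellOrderedOn (hPWO Min)
  -- choose preimages
  have hpre : ∀ t ∈ Min, ∃ c ∈ A₁, f c = t := fun t ht => ht.1
  set g : (Fin m → ℕ) → (Fin r → ℤ) := fun t =>
    if h : ∃ c ∈ A₁, f c = t then h.choose else 0 with hg
  refine ⟨hMinfin.toFinset.image g, ?_, ?_⟩
  · intro x hx
    simp only [Finset.coe_image, Set.mem_image, Finset.mem_coe,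
      Set.Finite.mem_toFinset] at hx
    obtain ⟨t, ht, rfl⟩ := hx
    have h := hpre t ht
    simp only [g, dif_pos h]
    exact h.choose_spec.1
  · ext x
    simp only [Set.mem_setOf_eq, Finset.mem_image, Set.Finite.mem_toFinset]
    constructor
    · intro hx
      have hxT : f x ∈ T := ⟨x, hx, rfl⟩
      obtain ⟨t, htMin, hle⟩ := hdom (f x) hxT
      have h := hpre t htMin
      set c := g t with hc
      have hcA : c ∈ A₁ ∧ f c = t := by
        simp only [hc, g, dif_pos h]; exact ⟨h.choose_spec.1, h.choose_spec.2⟩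
      refine ⟨c, ⟨t, htMin, rfl⟩, x - c, ⟨?_, ?_⟩, by ring⟩
      · have := hx.1; have := hcA.1.1
        simp only [Pi.sub_apply, Finset.sum_sub_distrib]
        omega
      · intro k
        rw [hℓsub, mul_sub, sub_nonneg]
        have h1 : 0 ≤ ε k * ℓ k c := hcA.1.2 k
        have h2 : 0 ≤ ε k * ℓ k x := hx.2 k
        have h3 : (ε k * ℓ k c).toNat ≤ (ε k * ℓ k x).toNat := by
          have := hle k
          rw [← hcA.2] at this
          exact this
        omega
    · rintro ⟨c, ⟨t, htMin, rfl⟩, a, ha, rfl⟩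
      have h := hpre t htMin
      have hcA : g t ∈ A₁ := by simp only [g, dif_pos h]; exact h.choose_spec.1
      constructor
      · simp only [Pi.add_apply, Finset.sum_add_distrib, hcA.1, ha.1]; ring
      · intro k
        rw [hℓadd, mul_add]
        exact add_nonneg (hcA.2 k) (ha.2 k)
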